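/- arXiv:1811.08957 — 2 statements merged into one kernel-verified Lean document; each statement's English description precedes it below -/
import Mathlib

section
/- Let $0 < \alpha_0 < \bar\varrho/2$ and let $h \in C^1[0,\bar\varrho)$ with $h(0)=0$, $h'>0$ on $(0,\bar\varrho)$, $\lim_{\varrho\to\bar\varrho^-} h(\varrho) = +\infty$, $H(\varrho) = \varrho\int_{\bar\varrho/2}^{\varrho} h(z)/z^2\,dz$. Then there exist $\alpha_1 \in (0,\alpha_0)$ and $c>0$ such that for all $r \in [\alpha_0, \bar\varrho - \alpha_0]$ and all $\varrho \in [0,\bar\varrho)$: (i) if $\alpha_1 \leq \varrho \leq \bar\varrho - \alpha_1$ then $H(\varrho)-H(r)-H'(r)(\varrho - r) \geq c(\varrho - r)^2$; (ii) if $0 \leq \varrho \leq \alpha_1$ then $H(\varrho)-H(r)-H'(r)(\varrho - r) \geq h(r)/2$; (iii) if $\bar\varrho - \alpha_1 \leq \varrho < \bar\varrho$ then $H(\varrho)-H(r)-H'(r)(\varrho - r) \geq H(\varrho)/2$. -/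
/-!
`H ϱ = ϱ ∫_{ϱbar/2}^ϱ h(z)/z² dz` solves `ϱ H' - H = h` and `ϱ H'' = h'`, so `H` is convex and its
Bregman divergence is `H ϱ - H r - H'(r) (ϱ - r) = H ϱ - H'(r) ϱ + h r`. On a compact subinterval
of `(0, ϱbar)` the second derivative `h'/ϱ` has a positive minimum, which gives (i). Since
`h(0) = 0`, `H ϱ → 0` as `ϱ → 0⁺`, so near the vacuum the divergence is close to `h r`, which gives
(ii). Near `ϱbar` the bound `h ϱ ≳ (ϱbar - ϱ)^(-β)` with `β > 1` makes `∫ h/z²` diverge, so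
`H ϱ → ∞` swamps the bounded term `H'(r) ϱ`, which gives (iii).
-/

open Filter Set Topology MeasureTheory intervalIntegral

theorem ConvexOn.add_mul_sub_le_of_hasDerivAt {S : Set ℝ} {f : ℝ → ℝ} {f' x y : ℝ}
    (hfc : ConvexOn ℝ S f) (hx : x ∈ S) (hy : y ∈ S) (hf' : HasDerivAt f f' x) :
    f x + f' * (y - x) ≤ f y := by
  rcases lt_trichotomy x y with hxy | rfl | hyx
  · have hslope := hfc.le_slope_of_hasDerivAt hx hy hxy hf'
    rw [slope_def_field, le_div_iff₀ (sub_pos.2 hxy)] at hslope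
    linarith
  · simp
  · have hslope := hfc.slope_le_of_hasDerivAt hy hx hyx hf'
    rw [slope_def_field, div_le_iff₀ (sub_pos.2 hyx)] at hslope
    linarith

theorem mul_sq_le_sub_sub_mul_of_hasDerivAt2 {S : Set ℝ} {f f' f'' : ℝ → ℝ} {c x y : ℝ}
    (hS : Convex ℝ S) (hf : ∀ z ∈ S, HasDerivAt f (f' z) z)
    (hf' : ∀ z ∈ S, HasDerivAt f' (f'' z) z) (hc : ∀ z ∈ S, 2 * c ≤ f'' z)
    (hx : x ∈ S) (hy : y ∈ S) :
    c * (y - x) ^ 2 ≤ f y - f x - f' x * (y - x) := by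
  have hg : ∀ z ∈ S, HasDerivAt (fun t => f t - c * t ^ 2) (f' z - 2 * c * z) z :=
    fun z hz => by
      refine ((hf z hz).fun_sub ((hasDerivAt_pow 2 z).const_mul c)).congr_deriv ?_
      norm_num
      ring
  have hg' : ∀ z ∈ S, HasDerivAt (fun t => f' t - 2 * c * t) (f'' z - 2 * c) z :=
    fun z hz => by simpa using (hf' z hz).fun_sub ((hasDerivAt_id z).const_mul (2 * c))
  have hconvex : ConvexOn ℝ S (fun t => f t - c * t ^ 2) :=
    convexOn_of_hasDerivWithinAt2_nonneg hS
      (fun z hz => (hg z hz).continuousAt.continuousWithinAt)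
      (fun z hz => (hg z (interior_subset hz)).hasDerivWithinAt)
      (fun z hz => (hg' z (interior_subset hz)).hasDerivWithinAt)
      (fun z hz => sub_nonneg.2 (hc z (interior_subset hz)))
  linear_combination hconvex.add_mul_sub_le_of_hasDerivAt hx hy (hg x hx)

theorem intervalIntegrable_div_sq {g : ℝ → ℝ} {u v : ℝ} (hg : ContinuousOn g (uIcc u v))
    (h0 : (0 : ℝ) ∉ uIcc u v) : IntervalIntegrable (fun z => g z / z ^ 2) volume u v :=
  (hg.div (continuousOn_pow 2) fun _ hz =>
    pow_ne_zero 2 (ne_of_mem_of_not_mem hz h0)).intervalIntegrable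

theorem abs_integral_div_sq_le {g : ℝ → ℝ} {u v M : ℝ} (hu : 0 < u) (huv : u ≤ v)
    (hM : ∀ z ∈ Icc u v, |g z| ≤ M) :
    |∫ z in u..v, g z / z ^ 2| ≤ M * (u⁻¹ - v⁻¹) := by
  have hpos : ∀ z ∈ uIcc u v, 0 < z := fun z hz => hu.trans_le (by simpa [huv] using hz.1)
  have hprim : ∀ z ∈ uIcc u v, HasDerivAt (fun t => -(M * t⁻¹)) (M / z ^ 2) z :=
    fun z hz => by
      refine ((hasDerivAt_inv (hpos z hz).ne').const_mul M).fun_neg.congr_deriv ?_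
      ring
  have hint : IntervalIntegrable (fun z => M / z ^ 2) volume u v :=
    intervalIntegrable_div_sq continuousOn_const fun h0 => (hpos 0 h0).false
  calc |∫ z in u..v, g z / z ^ 2| ≤ ∫ z in u..v, M / z ^ 2 := by
        rw [← Real.norm_eq_abs]
        refine norm_integral_le_of_norm_le huv (ae_of_all _ fun z hz => ?_) hint
        rw [Real.norm_eq_abs, abs_div, abs_of_nonneg (sq_nonneg z)]
        exact div_le_div_of_nonneg_right (hM z (Ioc_subset_Icc_self hz)) (sq_nonneg z)
    _ = M * (u⁻¹ - v⁻¹) := by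
        rw [integral_eq_sub_of_hasDerivAt hprim hint]
        ring

theorem tendsto_mul_integral_div_sq_nhdsGT_zero {g : ℝ → ℝ} {b : ℝ} (hb : 0 < b)
    (hg : ContinuousOn g (Icc 0 b)) (hg0 : g 0 = 0) :
    Tendsto (fun ρ => ρ * ∫ z in ρ..b, g z / z ^ 2) (𝓝[>] 0) (𝓝 0) := by
  obtain ⟨M, hM⟩ := isCompact_Icc.exists_bound_of_continuousOn hg
  have hM0 : 0 ≤ M := (abs_nonneg _).trans (hM 0 ⟨le_rfl, hb.le⟩)
  rw [Metric.tendsto_nhds]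
  intro ε hε
  have hsmall : ∀ᶠ z in 𝓝[≥] (0 : ℝ), |g z| < ε / 2 := by
    have hcont := hg 0 ⟨le_rfl, hb.le⟩
    rw [ContinuousWithinAt, nhdsWithin_Icc_eq_nhdsGE hb, hg0] at hcont
    simpa using hcont.eventually (Metric.ball_mem_nhds 0 (half_pos hε))
  obtain ⟨δ₀, hδ₀, hgδ₀⟩ := mem_nhdsGE_iff_exists_Ico_subset.1 hsmall
  -- split `∫_ρ^b` at `δ`: `g` is small on `[ρ, δ]`, and `∫_δ^b` is a constant
  set δ := min (δ₀ / 2) b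
  have hδ : 0 < δ := lt_min (half_pos hδ₀) hb
  have hδδ₀ : δ < δ₀ := (min_le_left _ _).trans_lt (half_lt_self hδ₀)
  have htail : Tendsto (fun ρ : ℝ => ρ * (M * δ⁻¹)) (𝓝 0) (𝓝 0) := by
    simpa using (continuous_mul_const (M * δ⁻¹)).tendsto 0
  filter_upwards [self_mem_nhdsWithin, nhdsWithin_le_nhds (eventually_lt_nhds hδ),
    nhdsWithin_le_nhds (htail.eventually_lt_const (half_pos hε))] with ρ hρ hρδ hρM
  have hρ : 0 < ρ := hρ
  have hint : ∀ u v, 0 < u → u ≤ v → v ≤ b →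
      IntervalIntegrable (fun z => g z / z ^ 2) volume u v := fun u v hu huv hvb =>
    intervalIntegrable_div_sq (hg.mono (by rw [uIcc_of_le huv]; exact Icc_subset_Icc hu.le hvb))
      (by rw [uIcc_of_le huv]; exact fun h0 => hu.not_ge h0.1)
  have hnear : |∫ z in ρ..δ, g z / z ^ 2| ≤ ε / 2 * (ρ⁻¹ - δ⁻¹) :=
    abs_integral_div_sq_le hρ hρδ.le fun z hz =>
      (hgδ₀ ⟨hρ.le.trans hz.1, hz.2.trans_lt hδδ₀⟩).le
  have hfar : |∫ z in δ..b, g z / z ^ 2| ≤ M * (δ⁻¹ - b⁻¹) :=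
    abs_integral_div_sq_le hδ (min_le_right _ _) fun z hz => hM z ⟨hδ.le.trans hz.1, hz.2⟩
  rw [← integral_add_adjacent_intervals (hint ρ δ hρ hρδ.le (min_le_right _ _))
    (hint δ b hδ (min_le_right _ _) le_rfl), dist_zero_right, norm_mul, Real.norm_eq_abs,
    Real.norm_eq_abs, abs_of_pos hρ]
  calc ρ * |(∫ z in ρ..δ, g z / z ^ 2) + ∫ z in δ..b, g z / z ^ 2|
      ≤ ρ * (ε / 2 * ρ⁻¹ + M * δ⁻¹) := by
        gcongr
        refine (abs_add_le _ _).trans (add_le_add (hnear.trans ?_) (hfar.trans ?_))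
        · gcongr; exact sub_le_self _ (inv_pos.2 hδ).le
        · gcongr; exact sub_le_self _ (inv_pos.2 hb).le
    _ = ε / 2 + ρ * (M * δ⁻¹) := by field_simp
    _ < ε := by linarith

theorem tendsto_integral_nhdsLT_atTop_of_rpow_le {g : ℝ → ℝ} {a b c β : ℝ} (hab : a < b)
    (hg : ContinuousOn g (Ico a b)) (hc : 0 < c) (hβ : 1 < β)
    (hlow : ∀ᶠ z in 𝓝[<] b, c * (b - z) ^ (-β) ≤ g z) :
    Tendsto (fun x => ∫ z in a..x, g z) (𝓝[<] b) atTop := by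
  obtain ⟨l, hlb, hl⟩ := mem_nhdsLT_iff_exists_Ioo_subset.1 hlow
  obtain ⟨a', ha', ha'b⟩ := exists_between (max_lt hab hlb)
  have haa' : a ≤ a' := (le_max_left _ _).trans ha'.le
  have hint : ∀ u v, a ≤ u → u ≤ v → v < b → IntervalIntegrable g volume u v :=
    fun u v hu huv hvb =>
      (hg.mono (by rw [uIcc_of_le huv]; exact Icc_subset_Ico hu hvb)).intervalIntegrable
  have hlower : ∀ x ∈ Ico a' b,
      (∫ z in a..a', g z) + c / (β - 1) * ((b - x) ^ (1 - β) - (b - a') ^ (1 - β)) ≤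
        ∫ z in a..x, g z := by
    rintro x ⟨hx, hxb⟩
    have hrpow : ∫ z in a'..x, c * (b - z) ^ (-β) =
        c / (β - 1) * ((b - x) ^ (1 - β) - (b - a') ^ (1 - β)) := by
      have h0 : (0 : ℝ) ∉ uIcc (b - x) (b - a') := by
        rw [uIcc_of_le (by linarith)]
        exact fun h0 => (sub_pos.2 hxb).not_ge h0.1
      rw [intervalIntegral.integral_const_mul, integral_comp_sub_left (fun z => z ^ (-β)),
        integral_rpow (Or.inr ⟨by linarith, h0⟩), neg_add_eq_sub]
      field_simp [show β - 1 ≠ 0 by linarith, show 1 - β ≠ 0 by linarith]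
      ring
    have hcomp : ∫ z in a'..x, c * (b - z) ^ (-β) ≤ ∫ z in a'..x, g z := by
      refine integral_mono_on hx ?_ (hint a' x haa' hx hxb) fun z hz =>
        hl ⟨(le_max_right _ _).trans_lt (ha'.trans_le hz.1), hz.2.trans_lt hxb⟩
      refine ContinuousOn.intervalIntegrable fun z hz => ?_
      rw [uIcc_of_le hx] at hz
      exact (continuousAt_const.mul ((continuousAt_const.sub continuousAt_id).rpow_const
        (Or.inl (sub_pos.2 (hz.2.trans_lt hxb)).ne'))).continuousWithinAt
    rw [← integral_add_adjacent_intervals (hint a a' le_rfl haa' ha'b) (hint a' x haa' hx hxb)]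
    linarith
  have hdist : Tendsto (fun x => b - x) (𝓝[<] b) (𝓝[>] 0) :=
    tendsto_nhdsWithin_iff.2
      ⟨tendsto_nhdsWithin_of_tendsto_nhds (by simpa using (continuous_sub_left b).tendsto b),
        eventually_nhdsWithin_of_forall fun x hx => mem_Ioi.2 (sub_pos.2 hx)⟩
  have hbound : Tendsto (fun x => (∫ z in a..a', g z) +
      c / (β - 1) * ((b - x) ^ (1 - β) - (b - a') ^ (1 - β))) (𝓝[<] b) atTop :=
    tendsto_atTop_add_const_left _ _ <| Tendsto.const_mul_atTop (div_pos hc (by linarith)) <|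
      tendsto_atTop_add_const_right _ _ <|
        (tendsto_rpow_neg_nhdsGT_zero (by linarith)).comp hdist
  refine tendsto_atTop_mono' _ ?_ hbound
  filter_upwards [Ioo_mem_nhdsLT ha'b] with x hx using hlower x ⟨hx.1.le, hx.2⟩

noncomputable def bregman (f : ℝ → ℝ) (r ρ : ℝ) : ℝ := f ρ - f r - deriv f r * (ρ - r)

noncomputable def potential (h : ℝ → ℝ) (a ρ : ℝ) : ℝ := ρ * ∫ z in a..ρ, h z / z ^ 2

section Potential

variable {h : ℝ → ℝ} {a b x : ℝ}

theorem hasDerivAt_integral_div_sq (hh : ContinuousOn h (Ioo 0 b)) (ha : a ∈ Ioo 0 b)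
    (hx : x ∈ Ioo 0 b) : HasDerivAt (fun ρ => ∫ z in a..ρ, h z / z ^ 2) (h x / x ^ 2) x := by
  have hc : ContinuousOn (fun z => h z / z ^ 2) (Ioo 0 b) :=
    hh.div (continuousOn_pow 2) fun z hz => pow_ne_zero 2 hz.1.ne'
  exact integral_hasDerivAt_right
    ((hc.mono (ordConnected_Ioo.uIcc_subset ha hx)).intervalIntegrable)
    (hc.stronglyMeasurableAtFilter isOpen_Ioo x hx) (hc.continuousAt (isOpen_Ioo.mem_nhds hx))

theorem hasDerivAt_potential (hh : ContinuousOn h (Ioo 0 b)) (ha : a ∈ Ioo 0 b)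
    (hx : x ∈ Ioo 0 b) :
    HasDerivAt (potential h a) ((∫ z in a..x, h z / z ^ 2) + h x / x) x := by
  refine ((hasDerivAt_id x).mul (hasDerivAt_integral_div_sq hh ha hx)).congr_deriv ?_
  simp only [id, one_mul]
  field_simp [hx.1.ne']

theorem deriv_potential (hh : ContinuousOn h (Ioo 0 b)) (ha : a ∈ Ioo 0 b)
    (hx : x ∈ Ioo 0 b) : deriv (potential h a) x = (∫ z in a..x, h z / z ^ 2) + h x / x :=
  (hasDerivAt_potential hh ha hx).deriv

theorem mul_deriv_potential_sub_potential (hh : ContinuousOn h (Ioo 0 b)) (ha : a ∈ Ioo 0 b)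
    (hx : x ∈ Ioo 0 b) : x * deriv (potential h a) x - potential h a x = h x := by
  rw [deriv_potential hh ha hx, potential]
  field_simp [hx.1.ne']
  ring

theorem hasDerivAt_deriv_potential (hh : ContinuousOn h (Ioo 0 b)) (ha : a ∈ Ioo 0 b)
    (hx : x ∈ Ioo 0 b) {h' : ℝ} (hd : HasDerivAt h h' x) :
    HasDerivAt (deriv (potential h a)) (h' / x) x := by
  have heq : (fun y => (∫ z in a..y, h z / z ^ 2) + h y / y) =ᶠ[𝓝 x] deriv (potential h a) :=
    eventually_of_mem (isOpen_Ioo.mem_nhds hx) fun y hy => (deriv_potential hh ha hy).symm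
  refine (((hasDerivAt_integral_div_sq hh ha hx).add
    (hd.div (hasDerivAt_id x) hx.1.ne')).congr_of_eventuallyEq heq.symm).congr_deriv ?_
  simp only [id]
  field_simp [hx.1.ne']
  ring

theorem continuousOn_deriv_potential (hh : ContinuousOn h (Ioo 0 b)) (ha : a ∈ Ioo 0 b) :
    ContinuousOn (deriv (potential h a)) (Ioo 0 b) := by
  have hI : ContinuousOn (fun x => ∫ z in a..x, h z / z ^ 2) (Ioo 0 b) := fun x hx =>
    (hasDerivAt_integral_div_sq hh ha hx).continuousAt.continuousWithinAt
  exact (hI.add (hh.div continuousOn_id fun x hx => hx.1.ne')).congr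
    fun x hx => deriv_potential hh ha hx

theorem exists_forall_deriv_potential_le (hh : ContinuousOn h (Ioo 0 b)) (ha : a ∈ Ioo 0 b)
    {s t : ℝ} (hs : 0 < s) (ht : t < b) :
    ∃ K, 0 ≤ K ∧ ∀ r ∈ Icc s t, deriv (potential h a) r ≤ K := by
  obtain ⟨K, hK⟩ := isCompact_Icc.exists_bound_of_continuousOn
    ((continuousOn_deriv_potential hh ha).mono (Icc_subset_Ioo hs ht))
  exact ⟨max K 0, le_max_right _ _, fun r hr =>
    (le_abs_self _).trans ((hK r hr).trans (le_max_left _ _))⟩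

theorem bregman_potential_eq (hh : ContinuousOn h (Ioo 0 b)) (ha : a ∈ Ioo 0 b)
    {r : ℝ} (hr : r ∈ Ioo 0 b) (ρ : ℝ) :
    bregman (potential h a) r ρ = potential h a ρ - deriv (potential h a) r * ρ + h r := by
  rw [bregman]
  linear_combination mul_deriv_potential_sub_potential hh ha hr

theorem continuousWithinAt_potential_zero (hh : ContinuousOn h (Ico 0 b)) (h0 : h 0 = 0)
    (ha : a ∈ Ioo 0 b) : ContinuousWithinAt (potential h a) (Ici 0) 0 := by
  rw [← continuousWithinAt_Ioi_iff_Ici, ContinuousWithinAt,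
    show potential h a 0 = -0 by simp [potential]]
  refine Tendsto.congr (fun ρ => ?_)
    (tendsto_mul_integral_div_sq_nhdsGT_zero ha.1 (hh.mono (Icc_subset_Ico_right ha.2)) h0).neg
  rw [potential, integral_symm a, mul_neg, neg_neg]

theorem tendsto_potential_nhdsLT_atTop (hh : ContinuousOn h (Ioo 0 b)) (ha : a ∈ Ioo 0 b)
    {c β : ℝ} (hc : 0 < c) (hβ : 1 < β) (hlow : ∀ᶠ z in 𝓝[<] b, c ≤ h z * (b - z) ^ β) :
    Tendsto (potential h a) (𝓝[<] b) atTop := by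
  have hb : 0 < b := ha.1.trans ha.2
  have hlow' : ∀ᶠ z in 𝓝[<] b, c / b ^ 2 * (b - z) ^ (-β) ≤ h z / z ^ 2 := by
    filter_upwards [hlow, Ioo_mem_nhdsLT ha.2] with z hcz hzI
    have hbz : 0 < b - z := sub_pos.2 hzI.2
    have hz : 0 < z := ha.1.trans hzI.1
    have hhz : c * (b - z) ^ (-β) ≤ h z := by
      rw [Real.rpow_neg hbz.le, ← div_eq_mul_inv, div_le_iff₀ (Real.rpow_pos_of_pos hbz β)]
      exact hcz
    calc c / b ^ 2 * (b - z) ^ (-β) ≤ h z / b ^ 2 := by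
          rw [div_mul_eq_mul_div]; gcongr
      _ ≤ h z / z ^ 2 := by
          gcongr
          · exact (mul_nonneg hc.le (Real.rpow_nonneg hbz.le _)).trans hhz
          · exact hzI.2.le
  have hI := tendsto_integral_nhdsLT_atTop_of_rpow_le ha.2
    ((hh.div (continuousOn_pow 2) fun z hz => pow_ne_zero 2 hz.1.ne').mono
      (Ico_subset_Ioo_left ha.1)) (div_pos hc (pow_pos hb 2)) hβ hlow'
  exact (tendsto_nhdsWithin_of_tendsto_nhds tendsto_id).pos_mul_atTop hb hI

theorem exists_pos_mul_sq_le_bregman_potential (hh : ContDiffOn ℝ 1 h (Ioo 0 b))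
    (hh' : ∀ x ∈ Ioo 0 b, 0 < deriv h x) (ha : a ∈ Ioo 0 b) {s t : ℝ} (hs : 0 < s)
    (hst : s ≤ t) (ht : t < b) :
    ∃ c > 0, ∀ r ∈ Icc s t, ∀ ρ ∈ Icc s t, c * (ρ - r) ^ 2 ≤ bregman (potential h a) r ρ := by
  have hsub : Icc s t ⊆ Ioo 0 b := Icc_subset_Ioo hs ht
  obtain ⟨x₀, hx₀, hmin⟩ := isCompact_Icc.exists_isMinOn (nonempty_Icc.2 hst)
    (f := fun x => deriv h x / x) (((hh.continuousOn_deriv_of_isOpen isOpen_Ioo le_rfl).mono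
      hsub).div continuousOn_id fun x hx => (hsub hx).1.ne')
  have hsecond : ∀ x ∈ Icc s t, HasDerivAt (deriv (potential h a)) (deriv h x / x) x :=
    fun x hx => hasDerivAt_deriv_potential hh.continuousOn ha (hsub hx)
      ((hh.differentiableOn one_ne_zero x (hsub hx)).differentiableAt
        (isOpen_Ioo.mem_nhds (hsub hx))).hasDerivAt
  refine ⟨deriv h x₀ / x₀ / 2, half_pos (div_pos (hh' x₀ (hsub hx₀)) (hsub hx₀).1),
    fun r hr ρ hρ => ?_⟩
  refine mul_sq_le_sub_sub_mul_of_hasDerivAt2 (convex_Icc s t)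
    (fun x hx => (hasDerivAt_potential hh.continuousOn ha (hsub hx)).differentiableAt.hasDerivAt)
    hsecond (fun x hx => ?_) hr hρ
  have hmin_x : deriv h x₀ / x₀ ≤ deriv h x / x := hmin hx
  linarith

theorem eventually_half_le_bregman_potential_nhdsGT_zero (hh : ContinuousOn h (Ico 0 b))
    (h0 : h 0 = 0) (ha : a ∈ Ioo 0 b) {s t m : ℝ} (hs : 0 < s) (ht : t < b) (hm : 0 < m)
    (hhm : ∀ r ∈ Icc s t, m ≤ h r) :
    ∀ᶠ α in 𝓝[>] 0, ∀ r ∈ Icc s t, ∀ ρ ∈ Icc 0 α, h r / 2 ≤ bregman (potential h a) r ρ := by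
  have hh' : ContinuousOn h (Ioo 0 b) := hh.mono Ioo_subset_Ico_self
  obtain ⟨K, hK0, hK⟩ := exists_forall_deriv_potential_le hh' ha hs ht
  obtain ⟨u, hu, hHu⟩ := mem_nhdsGE_iff_exists_Ico_subset.1 <|
    (continuousWithinAt_potential_zero hh h0 ha).eventually_const_lt
      (show -(m / 4) < potential h a 0 by simp [potential]; linarith)
  have hKα : Tendsto (fun α => K * α) (𝓝 0) (𝓝 0) := by
    simpa using (continuous_const_mul K).tendsto 0
  filter_upwards [nhdsWithin_le_nhds (eventually_lt_nhds hu),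
    nhdsWithin_le_nhds (hKα.eventually_lt_const (by positivity : 0 < m / 4))]
    with α hαu hαK r hr ρ hρ
  have hHρ : -(m / 4) < potential h a ρ := hHu ⟨hρ.1, hρ.2.trans_lt hαu⟩
  rw [bregman_potential_eq hh' ha (Icc_subset_Ioo hs ht hr)]
  linarith [hhm r hr, mul_le_mul_of_nonneg_right (hK r hr) hρ.1,
    mul_le_mul_of_nonneg_left hρ.2 hK0]

theorem eventually_half_le_bregman_potential_nhdsLT (hh : ContinuousOn h (Ioo 0 b))
    (ha : a ∈ Ioo 0 b) {c β : ℝ} (hc : 0 < c) (hβ : 1 < β)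
    (hlow : ∀ᶠ z in 𝓝[<] b, c ≤ h z * (b - z) ^ β) {s t : ℝ} (hs : 0 < s) (ht : t < b)
    (hhs : ∀ r ∈ Icc s t, 0 ≤ h r) :
    ∀ᶠ α in 𝓝[>] 0, ∀ r ∈ Icc s t, ∀ ρ ∈ Ico (b - α) b,
      potential h a ρ / 2 ≤ bregman (potential h a) r ρ := by
  obtain ⟨K, hK0, hK⟩ := exists_forall_deriv_potential_le hh ha hs ht
  obtain ⟨l, hl, hHl⟩ := mem_nhdsLT_iff_exists_Ioo_subset.1 <|
    (tendsto_potential_nhdsLT_atTop hh ha hc hβ hlow).eventually_ge_atTop (2 * K * b)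
  filter_upwards
    [nhdsWithin_le_nhds (eventually_lt_nhds (sub_pos.2 (max_lt hl (ha.1.trans ha.2))))]
    with α hα r hr ρ hρ
  have hρ0 : 0 ≤ ρ := by linarith [le_max_right l 0, hρ.1]
  have hHρ : 2 * K * b ≤ potential h a ρ := hHl ⟨by linarith [le_max_left l 0, hρ.1], hρ.2⟩
  rw [bregman_potential_eq hh ha (Icc_subset_Ioo hs ht hr)]
  linarith [hhs r hr, mul_le_mul_of_nonneg_right (hK r hr) hρ0,
    mul_le_mul_of_nonneg_left hρ.2.le hK0]

end Potential

theorem stmt11_general (ϱbar α₀ : ℝ) (hα₀ : 0 < α₀) (hα₀' : α₀ < ϱbar / 2)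
    (h : ℝ → ℝ) (hh : ContDiffOn ℝ 1 h (Set.Ico 0 ϱbar)) (h0 : h 0 = 0)
    (hh' : ∀ x ∈ Set.Ioo (0:ℝ) ϱbar, 0 < deriv h x)
    (H : ℝ → ℝ) (hH : ∀ ρ : ℝ, H ρ = ρ * ∫ z in (ϱbar / 2)..ρ, h z / z ^ 2)
    (β : ℝ) (hβ : 5 / 2 < β)
    (hliminf : ∃ c > 0, ∀ᶠ ρ in nhdsWithin ϱbar (Set.Iio ϱbar),
        c ≤ h ρ * (ϱbar - ρ) ^ β) :
    ∃ α₁ ∈ Set.Ioo (0:ℝ) α₀, ∃ c > 0,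
      ∀ r ∈ Set.Icc α₀ (ϱbar - α₀), ∀ ρ ∈ Set.Ico (0:ℝ) ϱbar,
        (α₁ ≤ ρ → ρ ≤ ϱbar - α₁ →
          H ρ - H r - deriv H r * (ρ - r) ≥ c * (ρ - r) ^ 2) ∧
        (ρ ≤ α₁ →
          H ρ - H r - deriv H r * (ρ - r) ≥ h r / 2) ∧
        (ϱbar - α₁ ≤ ρ →
          H ρ - H r - deriv H r * (ρ - r) ≥ H ρ / 2) := by
  obtain ⟨c₀, hc₀, hlow⟩ := hliminf
  obtain rfl : H = potential h (ϱbar / 2) := funext hH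
  have ha : ϱbar / 2 ∈ Ioo 0 ϱbar := ⟨by linarith, by linarith⟩
  have hα₀b : ϱbar - α₀ < ϱbar := by linarith
  have hmono : StrictMonoOn h (Ico 0 ϱbar) :=
    strictMonoOn_of_deriv_pos (convex_Ico 0 ϱbar) hh.continuousOn (by rwa [interior_Ico])
  have hhα₀ : 0 < h α₀ := h0 ▸ hmono ⟨le_rfl, by linarith⟩ ⟨hα₀.le, by linarith⟩ hα₀
  have hhr : ∀ r ∈ Icc α₀ (ϱbar - α₀), h α₀ ≤ h r := fun r hr =>
    hmono.monotoneOn ⟨hα₀.le, by linarith⟩ ⟨by linarith [hr.1], by linarith [hr.2]⟩ hr.1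
  obtain ⟨α₁, ⟨⟨hvacuum, hjammed⟩, hα₁α₀⟩, hα₁⟩ :=
    (((eventually_half_le_bregman_potential_nhdsGT_zero hh.continuousOn h0 ha hα₀ hα₀b hhα₀
      hhr).and (eventually_half_le_bregman_potential_nhdsLT
        (hh.continuousOn.mono Ioo_subset_Ico_self) ha hc₀ (by linarith) hlow hα₀ hα₀b
          fun r hr => hhα₀.le.trans (hhr r hr))).and
      (nhdsWithin_le_nhds (eventually_lt_nhds hα₀))).and self_mem_nhdsWithin |>.exists
  obtain ⟨c, hc, hconvex⟩ := exists_pos_mul_sq_le_bregman_potential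
    (hh.mono Ioo_subset_Ico_self) hh' ha hα₁ (by linarith : α₁ ≤ ϱbar - α₁) (by linarith)
  refine ⟨α₁, ⟨hα₁, hα₁α₀⟩, c, hc, fun r hr ρ hρ => ⟨fun hρ₁ hρ₂ => ?_,
    fun hρ₁ => hvacuum r hr ρ ⟨hρ.1, hρ₁⟩, fun hρ₁ => hjammed r hr ρ ⟨hρ₁, hρ.2⟩⟩⟩
  exact hconvex r ⟨by linarith [hr.1], by linarith [hr.2]⟩ ρ ⟨hρ₁, hρ₂⟩

theorem stmt11 (ϱbar α₀ : ℝ) (hϱ : 0 < ϱbar) (hα₀ : 0 < α₀) (hα₀' : α₀ < ϱbar / 2)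
    (h : ℝ → ℝ) (hh : ContDiffOn ℝ 1 h (Set.Ico 0 ϱbar)) (h0 : h 0 = 0)
    (hh' : ∀ x ∈ Set.Ioo (0:ℝ) ϱbar, 0 < deriv h x)
    (hblow : Tendsto h (nhdsWithin ϱbar (Set.Iio ϱbar)) atTop)
    (H : ℝ → ℝ) (hH : ∀ ρ : ℝ, H ρ = ρ * ∫ z in (ϱbar / 2)..ρ, h z / z ^ 2)
    (β : ℝ) (hβ : 5 / 2 < β)
    (hliminf : ∃ c > 0, ∀ᶠ ρ in nhdsWithin ϱbar (Set.Iio ϱbar),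
        c ≤ h ρ * (ϱbar - ρ) ^ β) :
    ∃ α₁ ∈ Set.Ioo (0:ℝ) α₀, ∃ c > 0,
      ∀ r ∈ Set.Icc α₀ (ϱbar - α₀), ∀ ρ ∈ Set.Ico (0:ℝ) ϱbar,
        (α₁ ≤ ρ → ρ ≤ ϱbar - α₁ →
          H ρ - H r - deriv H r * (ρ - r) ≥ c * (ρ - r) ^ 2) ∧
        (ρ ≤ α₁ →
          H ρ - H r - deriv H r * (ρ - r) ≥ h r / 2) ∧
        (ϱbar - α₁ ≤ ρ →
          H ρ - H r - deriv H r * (ρ - r) ≥ H ρ / 2) :=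
  stmt11_general ϱbar α₀ hα₀ hα₀' h hh h0 hh' H hH β hβ hliminf
end

section
/- Under the hypotheses of the previous lemma (hard-sphere law), there exist $\alpha_1 \in (0,\alpha_0)$ and $c > 0$ such that for all $r \in [\alpha_0, \bar\varrho - \alpha_0]$: (i) $h(\varrho)-h(r)-h'(r)(\varrho-r) \leq c(\varrho - r)^2$ for $\alpha_1 \leq \varrho \leq \bar\varrho - \alpha_1$; (ii) $h(\varrho)-h(r)-h'(r)(\varrho-r) \leq 1 + h'(r)r - h(r)$ for $0 \leq \varrho \leq \alpha_1$; (iii) $h(\varrho)-h(r)-h'(r)(\varrho-r) \leq 2h(\varrho)$ for $\bar\varrho - \alpha_1 \leq \varrho < \bar\varrho$. -/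
open Filter

theorem stmt12 (ϱbar α₀ : ℝ) (hϱ : 0 < ϱbar) (hα₀ : 0 < α₀) (hα₀' : α₀ < ϱbar / 2)
    (h : ℝ → ℝ) (hh : ContDiffOn ℝ 2 h (Set.Ioo 0 ϱbar))
    (hh₁ : ContDiffOn ℝ 1 h (Set.Ico 0 ϱbar)) (h0 : h 0 = 0)
    (hh' : ∀ x ∈ Set.Ioo (0:ℝ) ϱbar, 0 < deriv h x)
    (hblow : Tendsto h (nhdsWithin ϱbar (Set.Iio ϱbar)) atTop) :
    ∃ α₁ ∈ Set.Ioo (0:ℝ) α₀, ∃ c > 0,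
      ∀ r ∈ Set.Icc α₀ (ϱbar - α₀), ∀ ρ ∈ Set.Ico (0:ℝ) ϱbar,
        (α₁ ≤ ρ → ρ ≤ ϱbar - α₁ →
          h ρ - h r - deriv h r * (ρ - r) ≤ c * (ρ - r) ^ 2) ∧
        (ρ ≤ α₁ →
          h ρ - h r - deriv h r * (ρ - r) ≤ 1 + deriv h r * r - h r) ∧
        (ϱbar - α₁ ≤ ρ →
          h ρ - h r - deriv h r * (ρ - r) ≤ 2 * h ρ) := by
  -- continuity of h at 0 within Ico
  have hc0 : ContinuousWithinAt h (Set.Ico 0 ϱbar) 0 :=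
    hh₁.continuousOn.continuousWithinAt ⟨le_refl 0, hϱ⟩
  have hev : ∀ᶠ x in nhdsWithin 0 (Set.Ico 0 ϱbar), h x < 1 := by
    have : h 0 < 1 := by rw [h0]; norm_num
    exact hc0.eventually_lt_const this
  rw [eventually_iff, Metric.mem_nhdsWithin_iff] at hev
  obtain ⟨δ, hδ, hδ'⟩ := hev
  set α₁ : ℝ := min (δ/2) (α₀/2) with hα₁def
  have hα₁0 : 0 < α₁ := lt_min (by linarith) (by linarith)
  have hα₁α₀ : α₁ < α₀ := lt_of_le_of_lt (min_le_right _ _) (by linarith)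
  have hα₁δ : α₁ < δ := lt_of_le_of_lt (min_le_left _ _) (by linarith)
  -- monotonicity : 0 ≤ h on Ico
  have hmono : StrictMonoOn h (Set.Ico 0 ϱbar) := by
    apply strictMonoOn_of_deriv_pos (convex_Ico 0 ϱbar) hh₁.continuousOn
    intro x hx
    rw [interior_Ico] at hx
    exact hh' x hx
  have hnonneg : ∀ x ∈ Set.Ico (0:ℝ) ϱbar, 0 < x → 0 ≤ h x := by
    intro x hx hx0
    have := hmono ⟨le_refl 0, hϱ⟩ hx hx0
    rw [h0] at this; linarith
  -- derivatives on the open interval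
  have hdiff : ∀ x ∈ Set.Ioo (0:ℝ) ϱbar, HasDerivAt h (deriv h x) x := by
    intro x hx
    exact ((hh.differentiableOn (by norm_num)).differentiableAt
      (isOpen_Ioo.mem_nhds hx)).hasDerivAt
  have hh2 : ContDiffOn ℝ 1 (deriv h) (Set.Ioo 0 ϱbar) := by
    have := hh.deriv_of_isOpen (m := 1) isOpen_Ioo (by norm_num)
    exact this
  have hdiff2 : ∀ x ∈ Set.Ioo (0:ℝ) ϱbar, HasDerivAt (deriv h) (deriv (deriv h) x) x := by
    intro x hx
    exact ((hh2.differentiableOn (by norm_num)).differentiableAt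
      (isOpen_Ioo.mem_nhds hx)).hasDerivAt
  have hcont2 : ContinuousOn (deriv (deriv h)) (Set.Ioo 0 ϱbar) :=
    hh2.continuousOn_deriv_of_isOpen isOpen_Ioo (by norm_num)
  -- the compact set K
  set K : Set ℝ := Set.Icc α₁ (ϱbar - α₁) with hKdef
  have hKsub : K ⊆ Set.Ioo 0 ϱbar := by
    intro x hx
    exact ⟨lt_of_lt_of_le hα₁0 hx.1, lt_of_le_of_lt hx.2 (by linarith)⟩
  obtain ⟨C, hC⟩ := (isCompact_Icc).exists_bound_of_continuousOn (hcont2.mono hKsub)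
  set c : ℝ := max C 1 with hcdef
  have hc0' : (0:ℝ) < c := lt_of_lt_of_le one_pos (le_max_right _ _)
  -- Lipschitz bound for deriv h on K
  have hlip : ∀ x ∈ K, ∀ y ∈ K, ‖deriv h y - deriv h x‖ ≤ c * ‖y - x‖ := by
    intro x hx y hy
    apply Convex.norm_image_sub_le_of_norm_hasDerivWithin_le
      (f' := deriv (deriv h)) (s := K)
      (fun z hz => (hdiff2 z (hKsub hz)).hasDerivWithinAt)
      (fun z hz => le_trans (hC z hz) (le_max_left _ _)) (convex_Icc _ _) hx hy
  -- key quadratic estimate on K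
  have key : ∀ r ∈ K, ∀ ρ ∈ K, h ρ - h r - deriv h r * (ρ - r) ≤ c * (ρ - r) ^ 2 := by
    intro r hr ρ hρ
    have hsub : Set.uIcc r ρ ⊆ K := Set.uIcc_subset_Icc hr hρ
    have main : ‖(h ρ - deriv h r * ρ) - (h r - deriv h r * r)‖ ≤ (c * ‖ρ - r‖) * ‖ρ - r‖ := by
      apply Convex.norm_image_sub_le_of_norm_hasDerivWithin_le
        (f := fun x => h x - deriv h r * x)
        (f' := fun x => deriv h x - deriv h r) (s := Set.uIcc r ρ)
      · intro z hz
        exact ((hdiff z (hKsub (hsub hz))).sub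
          (((hasDerivAt_id z).const_mul (deriv h r)).congr_deriv (by ring))).hasDerivWithinAt
      · intro z hz
        have h1 : ‖deriv h z - deriv h r‖ ≤ c * ‖z - r‖ := hlip r hr z (hsub hz)
        have h2 : ‖z - r‖ ≤ ‖ρ - r‖ := by
          rcases le_total r ρ with hle | hle
          · rw [Set.uIcc_of_le hle] at hz
            rw [Real.norm_eq_abs, Real.norm_eq_abs, abs_of_nonneg (by linarith [hz.1]),
              abs_of_nonneg (by linarith)]
            linarith [hz.2]
          · rw [Set.uIcc_of_ge hle] at hz
            rw [Real.norm_eq_abs, Real.norm_eq_abs, abs_of_nonpos (by linarith [hz.2]),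
              abs_of_nonpos (by linarith)]
            linarith [hz.1]
        calc ‖deriv h z - deriv h r‖ ≤ c * ‖z - r‖ := h1
          _ ≤ c * ‖ρ - r‖ := by nlinarith
      · exact convex_uIcc r ρ
      · exact Set.left_mem_uIcc
      · exact Set.right_mem_uIcc
    have : h ρ - h r - deriv h r * (ρ - r) ≤ ‖(h ρ - deriv h r * ρ) - (h r - deriv h r * r)‖ := by
      rw [Real.norm_eq_abs]
      have := le_abs_self ((h ρ - deriv h r * ρ) - (h r - deriv h r * r))
      linarith [this]
    calc h ρ - h r - deriv h r * (ρ - r)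
        ≤ ‖(h ρ - deriv h r * ρ) - (h r - deriv h r * r)‖ := this
      _ ≤ (c * ‖ρ - r‖) * ‖ρ - r‖ := main
      _ = c * (ρ - r) ^ 2 := by
          rw [Real.norm_eq_abs]; rw [show (c * |ρ - r|) * |ρ - r| = c * |ρ - r| ^ 2 by ring,
            sq_abs]
  refine ⟨α₁, ⟨hα₁0, hα₁α₀⟩, c, hc0', ?_⟩
  intro r hr ρ hρ
  have hrIoo : r ∈ Set.Ioo (0:ℝ) ϱbar := ⟨lt_of_lt_of_le hα₀ hr.1, by linarith [hr.2]⟩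
  have hrK : r ∈ K := ⟨by linarith [hr.1], by linarith [hr.2]⟩
  have hdr : 0 < deriv h r := hh' r hrIoo
  refine ⟨?_, ?_, ?_⟩
  · intro h1 h2
    exact key r hrK ρ ⟨h1, h2⟩
  · intro hρα₁
    have hρ1 : h ρ < 1 := by
      apply hδ' ⟨?_, hρ⟩
      rw [Metric.mem_ball, Real.dist_eq, sub_zero, abs_of_nonneg hρ.1]
      linarith [hρ.1]
    have : 0 ≤ deriv h r * ρ := mul_nonneg hdr.le hρ.1
    nlinarith
  · intro hρ'
    have hρ0 : 0 < ρ := by linarith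
    have h1 : 0 ≤ h ρ := hnonneg ρ hρ hρ0
    have h2 : 0 ≤ h r := hnonneg r ⟨hrIoo.1.le, hrIoo.2⟩ hrIoo.1
    have h3 : r < ρ := by linarith [hr.2]
    nlinarith
end
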